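/- Let I ⊆ ℝ be an open interval and let u : ℝ → ℝ be three times differentiable on I with u‴(x)·(u′(x)² − 2·u(x)·u″(x))·u(x)² + 1 = 0 for all x ∈ I. Then for every t ∈ ℝ, the function v(x) := (1 + t·x)²·u(x/(1 + t·x)) satisfies v‴(x)·(v′(x)² − 2·v(x)·v″(x))·v(x)² + 1 = 0 at every x with 1 + t·x ≠ 0 and x/(1 + t·x) ∈ I. (The vector field v₂ = x²∂ₓ + 2xu∂ᵤ of (7.3) generates a symmetry group of equation (7.1) of the paper.) -/

import Mathlib

/-!
The projective change of variables `x = y / (1 + t y)` acts on functions by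
`P_k f (y) = (1 + t y)^k f(y / (1 + t y))`, and the chain rule gives
`(P_k f)' = k t P_{k-1} f + P_{k-2} f'`. Iterating from `v = P_2 u` yields
`v' = 2t P_1 u + P_0 u'`, `v'' = 2t² P_0 u + 2t P_{-1} u' + P_{-2} u''` and, after a cancellation,
`v''' = P_{-4} u'''`. With `s = 1 + t x`, the quantity `v'² - 2 v v''` equals `u'² - 2 u u''` at
`x / s`, while `v² = s⁴ u²`, so the weights `s⁻⁴` and `s⁴` cancel in `v''' (v'² - 2 v v'') v²`.
-/

open Set

noncomputable section

def projMap (t y : ℝ) : ℝ := y / (1 + t * y)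

def projectiveTransform (t : ℝ) (k : ℤ) (f : ℝ → ℝ) (y : ℝ) : ℝ :=
  (1 + t * y) ^ k * f (projMap t y)

def projDomain (t : ℝ) (U : Set ℝ) : Set ℝ := {y | 1 + t * y ≠ 0 ∧ projMap t y ∈ U}

end

theorem isOpen_projDomain (t : ℝ) {U : Set ℝ} (hU : IsOpen U) : IsOpen (projDomain t U) := by
  have hcont : ContinuousOn (projMap t) {y | 1 + t * y ≠ 0} := fun y hy => by
    unfold projMap
    exact ContinuousAt.continuousWithinAt (by fun_prop (disch := exact hy))
  exact hcont.isOpen_inter_preimage (isOpen_ne_fun (by fun_prop) (by fun_prop)) hU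

theorem hasDerivAt_one_add_mul (t y : ℝ) : HasDerivAt (fun z => 1 + t * z) t y := by
  simpa using ((hasDerivAt_id y).const_mul t).const_add 1

theorem hasDerivAt_projMap {t y : ℝ} (hy : 1 + t * y ≠ 0) :
    HasDerivAt (projMap t) ((1 + t * y) ^ (-2 : ℤ)) y := by
  refine ((hasDerivAt_id' y).div (hasDerivAt_one_add_mul t y) hy).congr_deriv ?_
  field_simp
  ring

theorem hasDerivAt_projectiveTransform {t y : ℝ} (k : ℤ) {f : ℝ → ℝ} (hy : 1 + t * y ≠ 0)
    (hf : DifferentiableAt ℝ f (projMap t y)) :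
    HasDerivAt (projectiveTransform t k f)
      (k * t * projectiveTransform t (k - 1) f y
        + projectiveTransform t (k - 2) (deriv f) y) y := by
  have hpow := (hasDerivAt_zpow k _ (Or.inl hy)).comp y (hasDerivAt_one_add_mul t y)
  have hcomp := hf.hasDerivAt.comp y (hasDerivAt_projMap hy)
  refine (hpow.mul hcomp).congr_deriv ?_
  simp only [projectiveTransform, Function.comp_def]
  rw [zpow_sub₀ hy k 2, zpow_neg]
  ring

section

variable {t : ℝ} {f : ℝ → ℝ} {U : Set ℝ}

theorem eqOn_deriv_projectiveTransform_two (hf : ∀ x ∈ U, DifferentiableAt ℝ f x) :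
    EqOn (deriv (projectiveTransform t 2 f))
      (fun y => 2 * t * projectiveTransform t 1 f y + projectiveTransform t 0 (deriv f) y)
      (projDomain t U) := by
  intro y hy
  rw [(hasDerivAt_projectiveTransform 2 hy.1 (hf _ hy.2)).deriv]
  norm_num

theorem eqOn_deriv_deriv_projectiveTransform_two (hU : IsOpen U)
    (hf : ∀ x ∈ U, DifferentiableAt ℝ f x) (hf' : ∀ x ∈ U, DifferentiableAt ℝ (deriv f) x) :
    EqOn (deriv (deriv (projectiveTransform t 2 f)))
      (fun y => 2 * t * (t * projectiveTransform t 0 f y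
        + projectiveTransform t (-1) (deriv f) y) + projectiveTransform t (-2) (deriv (deriv f)) y)
      (projDomain t U) := by
  intro y hy
  rw [(eqOn_deriv_projectiveTransform_two hf).deriv (isOpen_projDomain t hU) hy]
  refine (((hasDerivAt_projectiveTransform 1 hy.1 (hf _ hy.2)).const_mul (2 * t)).add
    (hasDerivAt_projectiveTransform 0 hy.1 (hf' _ hy.2))).deriv.trans ?_
  norm_num

theorem deriv_deriv_deriv_projectiveTransform_two (hU : IsOpen U)
    (hf : ∀ x ∈ U, DifferentiableAt ℝ f x) (hf' : ∀ x ∈ U, DifferentiableAt ℝ (deriv f) x)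
    (hf'' : ∀ x ∈ U, DifferentiableAt ℝ (deriv (deriv f)) x) {x : ℝ} (hx : x ∈ projDomain t U) :
    deriv (deriv (deriv (projectiveTransform t 2 f))) x
      = projectiveTransform t (-4) (deriv (deriv (deriv f))) x := by
  rw [(eqOn_deriv_deriv_projectiveTransform_two hU hf hf').deriv (isOpen_projDomain t hU) hx]
  refine ((((hasDerivAt_projectiveTransform 0 hx.1 (hf _ hx.2)).const_mul t).add
    (hasDerivAt_projectiveTransform (-1) hx.1 (hf' _ hx.2))).const_mul (2 * t) |>.add
    (hasDerivAt_projectiveTransform (-2) hx.1 (hf'' _ hx.2))).deriv.trans ?_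
  push_cast
  ring

end

/-- The vector field `v₂ = x² ∂ₓ + 2xu ∂ᵤ` generates a symmetry group of equation (7.1). -/
theorem projective_symmetry_exampleII (a b t : ℝ) (u : ℝ → ℝ)
    (hu1 : ∀ x ∈ Set.Ioo a b, DifferentiableAt ℝ u x)
    (hu2 : ∀ x ∈ Set.Ioo a b, DifferentiableAt ℝ (deriv u) x)
    (hu3 : ∀ x ∈ Set.Ioo a b, DifferentiableAt ℝ (deriv (deriv u)) x)
    (hode : ∀ x ∈ Set.Ioo a b,
      deriv (deriv (deriv u)) x * ((deriv u x) ^ 2 - 2 * u x * deriv (deriv u) x)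
        * (u x) ^ 2 + 1 = 0) :
    ∀ x : ℝ, 1 + t * x ≠ 0 → x / (1 + t * x) ∈ Set.Ioo a b →
      deriv (deriv (deriv (fun y => (1 + t * y) ^ 2 * u (y / (1 + t * y))))) x *
          ((deriv (fun y => (1 + t * y) ^ 2 * u (y / (1 + t * y))) x) ^ 2
            - 2 * (fun y => (1 + t * y) ^ 2 * u (y / (1 + t * y))) x *
                deriv (deriv (fun y => (1 + t * y) ^ 2 * u (y / (1 + t * y)))) x) *
          ((fun y => (1 + t * y) ^ 2 * u (y / (1 + t * y))) x) ^ 2 + 1 = 0 := by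
  intro x hx hxI
  have hxD : x ∈ projDomain t (Ioo a b) := ⟨hx, hxI⟩
  have hv : (fun y => (1 + t * y) ^ 2 * u (y / (1 + t * y))) = projectiveTransform t 2 u := by
    funext y
    simp [projectiveTransform, projMap]
  rw [hv, eqOn_deriv_projectiveTransform_two hu1 hxD,
    eqOn_deriv_deriv_projectiveTransform_two isOpen_Ioo hu1 hu2 hxD,
    deriv_deriv_deriv_projectiveTransform_two isOpen_Ioo hu1 hu2 hu3 hxD]
  convert hode _ hxI using 2
  simp only [projectiveTransform, projMap]
  field_simp
  ring
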